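/- For density matrices ρ and σ (positive semidefinite with trace 1) and any s ∈ [0,1], ‖ρ^{1/2} σ^{1/2}‖₁² ≤ Tr(ρ^s σ^{1-s}). That is, the squared Uhlmann fidelity is bounded above by every Rényi overlap Q_s. -/

import Mathlib

open Matrix
open scoped ComplexOrder

/-- The positive semidefinite square root, as `Matrix.PosSemidef.sqrt` was defined in the older Mathlib. -/
noncomputable def Matrix.PosSemidef.sqrt {𝕜 : Type*} [RCLike 𝕜] {n : Type*} [Fintype n] [DecidableEq n]
    {A : Matrix n n 𝕜} (hA : A.PosSemidef) : Matrix n n 𝕜 :=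
  (hA.1.eigenvectorUnitary : Matrix n n 𝕜) * diagonal ((↑) ∘ (√·) ∘ hA.1.eigenvalues) *
    (star hA.1.eigenvectorUnitary : Matrix n n 𝕜)

/-- Trace norm `‖X‖₁ = Tr √(XᴴX)`. -/
noncomputable def traceNorm {n : Type*} [Fintype n] [DecidableEq n] (X : Matrix n n ℂ) : ℝ :=
  ((Matrix.posSemidef_conjTranspose_mul_self X).sqrt.trace).re

/-- Fractional power `A^s` of a positive semidefinite matrix, defined spectrally with the
convention `0 ^ s = 0` for all real `s`. -/
noncomputable def Matrix.PosSemidef.rpow {n : Type*} [Fintype n] [DecidableEq n]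
    {A : Matrix n n ℂ} (hA : A.PosSemidef) (s : ℝ) : Matrix n n ℂ :=
  hA.1.cfc (fun x => if x = 0 then 0 else x ^ s)

/-- Matrix logarithm of a positive semidefinite matrix, defined spectrally with the
convention `log 0 = 0` on the kernel. -/
noncomputable def Matrix.PosSemidef.log {n : Type*} [Fintype n] [DecidableEq n]
    {A : Matrix n n ℂ} (hA : A.PosSemidef) : Matrix n n ℂ :=
  hA.1.cfc Real.log

/-!
Write `‖X‖₁ = Re Tr(Z X)` with the contraction `Z = (XᴴX)^{-1/2} Xᴴ` (the convention `0 ^ s = 0`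
makes `(XᴴX)^{-1/2}` the pseudo-inverse of `|X|`). Splitting
`ρ^{1/2} σ^{1/2} = ρ^{(1-s)/2} ρ^{s/2} σ^{(1-s)/2} σ^{s/2}`, Cauchy–Schwarz for the
Hilbert–Schmidt inner product gives
`|Tr(Z ρ^{1/2} σ^{1/2})|² ≤ Tr(ρ^{1-s} Zᴴ σ^s Z) · Tr(ρ^s σ^{1-s})`.
Writing `ρ = U diag(p) Uᴴ`, `σ = V diag(q) Vᴴ` and `W = Vᴴ Z U`, the first factor is
`∑ p_i^{1-s} q_j^s |W_ji|²`, and the weighted AM–GM inequality `p^{1-s} q^s ≤ (1-s) p + s q`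
bounds it by `(1-s) Tr(ρ ZᴴZ) + s Tr(σ ZZᴴ) ≤ (1-s) Tr ρ + s Tr σ = 1`.
-/

open scoped MatrixOrder

lemma ite_rpow_mul_ite_rpow {x : ℝ} (hx : 0 ≤ x) (a b : ℝ) :
    (if x = 0 then 0 else x ^ a) * (if x = 0 then 0 else x ^ b) =
      if x = 0 then 0 else x ^ (a + b) := by
  split_ifs with h
  · simp
  · rw [Real.rpow_add (hx.lt_of_ne' h)]

lemma ite_rpow_le_rpow {x : ℝ} (hx : 0 ≤ x) (a : ℝ) : (if x = 0 then 0 else x ^ a) ≤ x ^ a := by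
  split_ifs
  · exact Real.rpow_nonneg hx a
  · rfl

lemma ite_rpow_mul_ite_rpow_le {p q s : ℝ} (hp : 0 ≤ p) (hq : 0 ≤ q) (hs0 : 0 ≤ s)
    (hs1 : s ≤ 1) :
    (if p = 0 then 0 else p ^ (1 - s)) * (if q = 0 then 0 else q ^ s) ≤ (1 - s) * p + s * q :=
  calc _ ≤ p ^ (1 - s) * q ^ s :=
        mul_le_mul (ite_rpow_le_rpow hp _) (ite_rpow_le_rpow hq _)
          (by split_ifs <;> positivity) (Real.rpow_nonneg hp _)
    _ ≤ (1 - s) * p + s * q :=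
        Real.geom_mean_le_arith_mean2_weighted (by linarith) hs0 hp hq (by ring)

namespace Matrix

variable {n : Type*} [Fintype n]

lemma norm_trace_mul_sq_le (A B : Matrix n n ℂ) :
    ‖(A * B).trace‖ ^ 2 ≤ (A * Aᴴ).trace.re * (Bᴴ * B).trace.re := by
  have hA : (A * Aᴴ).trace.re = ∑ i, ∑ j, ‖A i j‖ ^ 2 := by
    simp [trace, mul_apply, Complex.mul_conj, Complex.sq_norm]
  have hB : (Bᴴ * B).trace.re = ∑ i, ∑ j, ‖B j i‖ ^ 2 := by
    simp [trace, mul_apply, Complex.conj_mul', ← Complex.ofReal_pow]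
  rw [hA, hB]
  calc ‖(A * B).trace‖ ^ 2 ≤ (∑ i, ∑ j, ‖A i j‖ * ‖B j i‖) ^ 2 := by
        gcongr
        refine (norm_sum_le _ _).trans (Finset.sum_le_sum fun i _ => ?_)
        refine (norm_sum_le _ _).trans (le_of_eq ?_)
        simp_rw [norm_mul]
    _ ≤ _ := by
        rw [← Fintype.sum_prod_type' (fun i j => ‖A i j‖ * ‖B j i‖),
          ← Fintype.sum_prod_type' (fun i j => ‖A i j‖ ^ 2),
          ← Fintype.sum_prod_type' (fun i j => ‖B j i‖ ^ 2)]
        exact Finset.sum_mul_sq_le_sq_mul_sq _ _ _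

variable [DecidableEq n]

lemma trace_diagonal_mul_conjTranspose_mul_diagonal_mul (a b : n → ℝ) (W : Matrix n n ℂ) :
    (diagonal (fun i => (a i : ℂ)) * Wᴴ * diagonal (fun j => (b j : ℂ)) * W).trace =
      ↑(∑ i, ∑ j, a i * b j * Complex.normSq (W j i)) := by
  simp only [trace, diag, Complex.ofReal_sum]
  refine Finset.sum_congr rfl fun i _ => ?_
  rw [mul_apply]
  refine Finset.sum_congr rfl fun j _ => ?_
  rw [mul_diagonal, diagonal_mul, conjTranspose_apply, Complex.star_def, Complex.ofReal_mul,
    Complex.ofReal_mul, Complex.normSq_eq_conj_mul_self]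
  ring

namespace IsHermitian

variable {A B : Matrix n n ℂ}

lemma cfc_id' (hA : A.IsHermitian) : hA.cfc (fun x => x) = A := by
  rw [← hA.cfc_eq]
  exact _root_.cfc_id' ℝ A

lemma cfc_one (hA : A.IsHermitian) : hA.cfc (fun _ => 1) = 1 := by
  rw [← hA.cfc_eq]
  exact cfc_const_one ℝ A

lemma trace_cfc_mul_conjTranspose_mul_cfc_mul (hA : A.IsHermitian) (hB : B.IsHermitian)
    (f g : ℝ → ℝ) (Z : Matrix n n ℂ) :
    (hA.cfc f * Zᴴ * hB.cfc g * Z).trace =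
      ↑(∑ i, ∑ j, f (hA.eigenvalues i) * g (hB.eigenvalues j) *
        Complex.normSq ((star (hB.eigenvectorUnitary : Matrix n n ℂ) * Z *
          hA.eigenvectorUnitary) j i)) := by
  rw [← trace_diagonal_mul_conjTranspose_mul_diagonal_mul]
  simp only [IsHermitian.cfc, Unitary.conjStarAlgAut_apply, conjTranspose_mul,
    star_eq_conjTranspose, conjTranspose_conjTranspose, mul_assoc]
  rw [trace_mul_comm]
  simp only [mul_assoc, Function.comp_def]
  rfl

end IsHermitian

namespace PosSemidef

section RCLike

variable {𝕜 : Type*} [RCLike 𝕜] {A B C : Matrix n n 𝕜}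

lemma trace_mul_nonneg (hA : A.PosSemidef) (hB : B.PosSemidef) : 0 ≤ (A * B).trace := by
  obtain ⟨D, rfl⟩ := CStarAlgebra.nonneg_iff_eq_star_mul_self.mp hB.nonneg
  rw [← mul_assoc, trace_mul_comm, ← mul_assoc]
  exact (hA.mul_mul_conjTranspose_same D).trace_nonneg

lemma trace_mul_le_trace_mul (hA : A.PosSemidef) (hBC : B ≤ C) :
    (A * B).trace ≤ (A * C).trace := by
  have := hA.trace_mul_nonneg (le_iff.mp hBC)
  rwa [mul_sub, trace_sub, sub_nonneg] at this

end RCLike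

variable {A : Matrix n n ℂ}

lemma rpow_eq_cfc (hA : A.PosSemidef) (a : ℝ) :
    hA.rpow a = cfc (fun x : ℝ => if x = 0 then 0 else x ^ a) A :=
  (hA.1.cfc_eq _).symm

lemma rpow_mul_rpow (hA : A.PosSemidef) (a b : ℝ) :
    hA.rpow a * hA.rpow b = hA.rpow (a + b) := by
  rw [rpow_eq_cfc, rpow_eq_cfc, rpow_eq_cfc, ← cfc_mul _ _ A
    (A.finite_real_spectrum.continuousOn _) (A.finite_real_spectrum.continuousOn _)]
  exact cfc_congr fun x hx => ite_rpow_mul_ite_rpow (spectrum_nonneg_of_nonneg hA.nonneg hx) a b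

lemma rpow_half_mul_rpow_half (hA : A.PosSemidef) (a : ℝ) :
    hA.rpow (a / 2) * hA.rpow (a / 2) = hA.rpow a := by
  rw [rpow_mul_rpow, add_halves]

lemma rpow_one (hA : A.PosSemidef) : hA.rpow 1 = A := by
  rw [rpow_eq_cfc]
  conv_rhs => rw [← cfc_id' ℝ A]
  refine cfc_congr fun x _ => ?_
  split_ifs with h <;> simp [h]

lemma rpow_mul_self (hA : A.PosSemidef) (a : ℝ) : hA.rpow a * A = hA.rpow (a + 1) :=
  calc hA.rpow a * A = hA.rpow a * hA.rpow 1 := by rw [hA.rpow_one]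
    _ = hA.rpow (a + 1) := hA.rpow_mul_rpow a 1

lemma sqrt_eq_rpow_half (hA : A.PosSemidef) : hA.sqrt = hA.rpow (1 / 2) := by
  rw [rpow_eq_cfc]
  change hA.1.cfc Real.sqrt = _
  rw [← hA.1.cfc_eq]
  refine cfc_congr fun x _ => ?_
  split_ifs with h
  · simp [h]
  · exact Real.sqrt_eq_rpow x

lemma conjTranspose_rpow (hA : A.PosSemidef) (a : ℝ) : (hA.rpow a)ᴴ = hA.rpow a := by
  rw [rpow_eq_cfc]
  exact cfc_predicate (R := ℝ) _ A

lemma re_trace_rpow_mul_conjTranspose_mul_rpow_mul_le {P Q : Matrix n n ℂ}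
    (hP : P.PosSemidef) (hQ : Q.PosSemidef) (Z : Matrix n n ℂ) {s : ℝ} (hs0 : 0 ≤ s)
    (hs1 : s ≤ 1) :
    (hP.rpow (1 - s) * Zᴴ * hQ.rpow s * Z).trace.re ≤
      (1 - s) * (P * Zᴴ * Z).trace.re + s * (Zᴴ * Q * Z).trace.re := by
  have hPZZ : P * Zᴴ * Z = hP.1.cfc (fun x => x) * Zᴴ * hQ.1.cfc (fun _ => 1) * Z := by
    rw [hP.1.cfc_id', hQ.1.cfc_one, mul_one]
  have hZQZ : Zᴴ * Q * Z = hP.1.cfc (fun _ => 1) * Zᴴ * hQ.1.cfc (fun x => x) * Z := by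
    rw [hP.1.cfc_one, hQ.1.cfc_id', one_mul]
  rw [hPZZ, hZQZ, PosSemidef.rpow, PosSemidef.rpow,
    IsHermitian.trace_cfc_mul_conjTranspose_mul_cfc_mul,
    IsHermitian.trace_cfc_mul_conjTranspose_mul_cfc_mul,
    IsHermitian.trace_cfc_mul_conjTranspose_mul_cfc_mul]
  simp only [Complex.ofReal_re, Finset.mul_sum, ← Finset.sum_add_distrib]
  refine Finset.sum_le_sum fun i _ => Finset.sum_le_sum fun j _ => ?_
  have := ite_rpow_mul_ite_rpow_le (hP.eigenvalues_nonneg i) (hQ.eigenvalues_nonneg j) hs0 hs1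
  nlinarith [Complex.normSq_nonneg ((star (hQ.1.eigenvectorUnitary : Matrix n n ℂ) * Z *
    hP.1.eigenvectorUnitary) j i)]

lemma norm_trace_mul_sqrt_mul_sqrt_sq_le {ρ σ Z : Matrix n n ℂ} (hρ : ρ.PosSemidef)
    (hσ : σ.PosSemidef) (hZ₁ : Zᴴ * Z ≤ 1) (hZ₂ : Z * Zᴴ ≤ 1) {s : ℝ} (hs0 : 0 ≤ s)
    (hs1 : s ≤ 1) :
    ‖(Z * hρ.sqrt * hσ.sqrt).trace‖ ^ 2 ≤
      ((1 - s) * ρ.trace.re + s * σ.trace.re) * (hρ.rpow s * hσ.rpow (1 - s)).trace.re := by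
  set A := hσ.rpow (s / 2) * Z * hρ.rpow ((1 - s) / 2)
  set B := hρ.rpow (s / 2) * hσ.rpow ((1 - s) / 2)
  have hAB : (Z * hρ.sqrt * hσ.sqrt).trace = (A * B).trace := by
    have hsplit : ∀ {P : Matrix n n ℂ} (hP : P.PosSemidef),
        hP.sqrt = hP.rpow ((1 - s) / 2) * hP.rpow (s / 2) := fun hP => by
      rw [sqrt_eq_rpow_half, rpow_mul_rpow]; ring_nf
    rw [hsplit hρ, hsplit hσ]
    simp only [← mul_assoc]
    rw [trace_mul_comm]
    simp only [A, B, mul_assoc]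
  have hAA : (A * Aᴴ).trace = (hρ.rpow (1 - s) * Zᴴ * hσ.rpow s * Z).trace := by
    rw [← hρ.rpow_half_mul_rpow_half, ← hσ.rpow_half_mul_rpow_half]
    simp only [A, conjTranspose_mul, conjTranspose_rpow, ← mul_assoc]
    conv_rhs => rw [trace_mul_cycle, trace_mul_cycle]
    simp only [mul_assoc]
  have hBB : (Bᴴ * B).trace = (hρ.rpow s * hσ.rpow (1 - s)).trace := by
    rw [← hρ.rpow_half_mul_rpow_half, ← hσ.rpow_half_mul_rpow_half]
    simp only [B, conjTranspose_mul, conjTranspose_rpow, mul_assoc]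
    rw [trace_mul_comm (hσ.rpow ((1 - s) / 2))]
    simp only [mul_assoc]
  have hρZZ : (ρ * Zᴴ * Z).trace.re ≤ ρ.trace.re := by
    simpa only [mul_assoc, mul_one] using (Complex.le_def.mp (hρ.trace_mul_le_trace_mul hZ₁)).1
  have hZσZ : (Zᴴ * σ * Z).trace.re ≤ σ.trace.re := by
    rw [trace_mul_cycle, trace_mul_comm]
    simpa only [mul_one] using (Complex.le_def.mp (hσ.trace_mul_le_trace_mul hZ₂)).1
  have hA : (A * Aᴴ).trace.re ≤ (1 - s) * ρ.trace.re + s * σ.trace.re := by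
    rw [hAA]
    refine (hρ.re_trace_rpow_mul_conjTranspose_mul_rpow_mul_le hσ Z hs0 hs1).trans ?_
    gcongr
  have hB : 0 ≤ (Bᴴ * B).trace.re :=
    (Complex.le_def.mp (posSemidef_conjTranspose_mul_self B).trace_nonneg).1
  calc ‖(Z * hρ.sqrt * hσ.sqrt).trace‖ ^ 2 ≤ (A * Aᴴ).trace.re * (Bᴴ * B).trace.re := by
        rw [hAB]; exact norm_trace_mul_sq_le A B
    _ ≤ _ := by rw [← hBB]; gcongr

end PosSemidef

open PosSemidef in
lemma exists_contraction_re_trace_mul_eq_traceNorm (X : Matrix n n ℂ) :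
    ∃ Z : Matrix n n ℂ, Zᴴ * Z ≤ 1 ∧ Z * Zᴴ ≤ 1 ∧ traceNorm X = (Z * X).trace.re := by
  have hM := posSemidef_conjTranspose_mul_self X
  have hR : (hM.rpow (-1 / 2))ᴴ = hM.rpow (-1 / 2) := hM.conjTranspose_rpow _
  refine ⟨hM.rpow (-1 / 2) * Xᴴ, IsStarProjection.le_one ⟨?_, ?_⟩,
    IsStarProjection.le_one ⟨?_, ?_⟩, ?_⟩
  · have hRMR : hM.rpow (-1 / 2) * hM.rpow (-1 / 2) * (Xᴴ * X) * hM.rpow (-1 / 2) *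
        hM.rpow (-1 / 2) = hM.rpow (-1 / 2) * hM.rpow (-1 / 2) := by
      simp only [rpow_mul_rpow, rpow_mul_self]
      norm_num
    rw [IsIdempotentElem, conjTranspose_mul, conjTranspose_conjTranspose, hR]
    calc X * hM.rpow (-1 / 2) * (hM.rpow (-1 / 2) * Xᴴ) * (X * hM.rpow (-1 / 2) *
          (hM.rpow (-1 / 2) * Xᴴ))
        = X * (hM.rpow (-1 / 2) * hM.rpow (-1 / 2) * (Xᴴ * X) * hM.rpow (-1 / 2) *
          hM.rpow (-1 / 2)) * Xᴴ := by simp only [mul_assoc]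
      _ = _ := by rw [hRMR]; simp only [mul_assoc]
  · exact isHermitian_conjTranspose_mul_self _
  · have hZZ : hM.rpow (-1 / 2) * Xᴴ * (hM.rpow (-1 / 2) * Xᴴ)ᴴ = hM.rpow 0 := by
      rw [conjTranspose_mul, conjTranspose_conjTranspose, hR, ← mul_assoc, mul_assoc _ Xᴴ X]
      simp only [rpow_mul_rpow, rpow_mul_self]
      norm_num
    rw [IsIdempotentElem, hZZ, rpow_mul_rpow, add_zero]
  · exact isHermitian_mul_conjTranspose_self _
  · change (hM.sqrt.trace).re = _
    rw [sqrt_eq_rpow_half, mul_assoc, rpow_mul_self]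
    norm_num

end Matrix

/-- For density matrices `ρ`, `σ` and `s ∈ [0,1]`, the squared Uhlmann fidelity is bounded
above by the Rényi overlap: `‖ρ^{1/2} σ^{1/2}‖₁² ≤ Tr(ρ^s σ^{1-s})`. -/
theorem stmt2 {n : Type*} [Fintype n] [DecidableEq n]
    {ρ σ : Matrix n n ℂ} (hρ : ρ.PosSemidef) (hσ : σ.PosSemidef)
    (hρ1 : ρ.trace = 1) (hσ1 : σ.trace = 1)
    {s : ℝ} (hs : s ∈ Set.Icc (0:ℝ) 1) :
    (traceNorm (hρ.sqrt * hσ.sqrt)) ^ 2 ≤ ((hρ.rpow s * hσ.rpow (1 - s)).trace).re := by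
  obtain ⟨Z, hZ₁, hZ₂, hZ⟩ :=
    Matrix.exists_contraction_re_trace_mul_eq_traceNorm (hρ.sqrt * hσ.sqrt)
  have h := hρ.norm_trace_mul_sqrt_mul_sqrt_sq_le hσ hZ₁ hZ₂ hs.1 hs.2
  rw [hρ1, hσ1, Complex.one_re, mul_one, mul_one, sub_add_cancel, one_mul] at h
  rw [hZ, ← mul_assoc, ← sq_abs]
  exact (pow_le_pow_left₀ (abs_nonneg _) (Complex.abs_re_le_norm _) 2).trans h
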